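/- Let $p > 1$, $z_0 \in \mathbb{C}$, $0 < r_1 < r_2$, and let $Q : \mathbb{C} \to (0,\infty)$ be measurable such that for almost every $r \in (r_1,r_2)$ one has $0 < \|Q\|_{1/(p-1)}(z_0,r) < \infty$. Define on the annulus $R(z_0,r_1,r_2)$ the function $$\varrho_0(z) = \frac{Q(z)^{1/(p-1)}}{\int_0^{2\pi} Q(z_0 + |z-z_0| e^{i\theta})^{1/(p-1)}\, |z-z_0|\, d\theta}$$ (and $\varrho_0 = 0$ outside the annulus). Then for almost every $r \in (r_1,r_2)$ one has $\int_0^{2\pi} \varrho_0(z_0 + re^{i\theta})\, r\, d\theta = 1$, and $$\int_{R(z_0,r_1,r_2)} \frac{\varrho_0(z)^p}{Q(z)}\, dm(z) = \int_{r_1}^{r_2} \frac{dr}{\|Q\|_{1/(p-1)}(z_0,r)},$$ i.e. $\varrho_0$ attains the infimum of $\int_{R(z_0,r_1,r_2)} \varrho^p/Q\, dm$ over all measurable $\varrho \ge 0$ whose arclength integral over the circle $|z-z_0| = r$ is at least $1$ for a.e. $r \in (r_1,r_2)$. -/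

import Mathlib

open MeasureTheory ENNReal Real
open scoped Classical

/-- The arclength integral `∫_{C(z₀,r)} Q^e |dz| = ∫_0^{2π} Q(z₀ + r e^{iθ})^e · r dθ`
of the `e`-th power of a positive function `Q` over the circle of radius `r`
centered at `z₀`, with values in `[0,∞]`. -/
noncomputable def circlePowInt (Q : ℂ → ℝ) (e : ℝ) (z0 : ℂ) (r : ℝ) : ℝ≥0∞ :=
  ∫⁻ θ in Set.Ioc (0 : ℝ) (2 * π),
    ENNReal.ofReal (Q (z0 + (r : ℂ) * Complex.exp ((θ : ℂ) * Complex.I))) ^ e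
      * ENNReal.ofReal r

/-- `‖Q‖_{1/(p-1)}(z₀,r) = (∫_{C(z₀,r)} Q^{1/(p-1)} |dz|)^{p-1}`. -/
noncomputable def normQ (Q : ℂ → ℝ) (p : ℝ) (z0 : ℂ) (r : ℝ) : ℝ≥0∞ :=
  circlePowInt Q (1 / (p - 1)) z0 r ^ (p - 1)

/-- The annulus `R(z₀,r₁,r₂) = {z ∈ ℂ : r₁ < |z - z₀| < r₂}`. -/
def annulus (z0 : ℂ) (r1 r2 : ℝ) : Set ℂ :=
  {z : ℂ | r1 < ‖z - z0‖ ∧ ‖z - z0‖ < r2}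

/-! Polar coordinates about `z₀` turn the integral over the annulus into `∫_{r₁}^{r₂}` of
arclength integrals over circles. On the circle of radius `r`, `ϱ₀ = Q^{1/(p-1)} / C(r)`, where
`C(r)` is the arclength integral of `Q^{1/(p-1)}`, so the arclength integral of `ϱ₀` is
`C(r) / C(r) = 1`. Since `p/(p-1) = 1/(p-1) + 1`, we get `ϱ₀^p / Q = Q^{1/(p-1)} / C(r)^p` there,
whose arclength integral is `C(r)^{1-p} = ‖Q‖_{1/(p-1)}(z₀,r)⁻¹`. -/
open Set

theorem Function.Periodic.setLIntegral_Ioc_add_eq {g : ℝ → ℝ≥0∞} {T : ℝ} (hT : 0 < T)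
    (hg : Function.Periodic g T) (s t : ℝ) :
    ∫⁻ x in Ioc s (s + T), g x = ∫⁻ x in Ioc t (t + T), g x := by
  have : Fact (0 < T) := ⟨hT⟩
  simp only [← hg.lift_coe]
  rw [AddCircle.lintegral_preimage T s, AddCircle.lintegral_preimage T t]

-- `circlePowInt Q e z0` is `circleLIntegral (fun z ↦ ENNReal.ofReal (Q z) ^ e) z0` by definition.
noncomputable def circleLIntegral (f : ℂ → ℝ≥0∞) (z0 : ℂ) (r : ℝ) : ℝ≥0∞ :=
  ∫⁻ θ in Ioc 0 (2 * π), f (circleMap z0 r θ) * ENNReal.ofReal r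

theorem circleLIntegral_congr {f g : ℂ → ℝ≥0∞} {z0 : ℂ} {r : ℝ}
    (h : ∀ z ∈ Metric.sphere z0 |r|, f z = g z) :
    circleLIntegral f z0 r = circleLIntegral g z0 r := by
  unfold circleLIntegral
  simp only [h _ (circleMap_mem_sphere' z0 r _)]

theorem circleLIntegral_div_const (f : ℂ → ℝ≥0∞) (z0 : ℂ) (r : ℝ) {c : ℝ≥0∞} (hc : c ≠ 0) :
    circleLIntegral (fun z => f z / c) z0 r = circleLIntegral f z0 r / c := by
  simp only [circleLIntegral, div_eq_mul_inv, mul_right_comm _ c⁻¹]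
  exact lintegral_mul_const' _ _ (ENNReal.inv_ne_top.mpr hc)

theorem continuous_circleMap_uncurry (z0 : ℂ) :
    Continuous fun q : ℝ × ℝ => circleMap z0 q.1 q.2 := by
  unfold circleMap
  fun_prop

theorem measurable_circleLIntegral_integrand {f : ℂ → ℝ≥0∞} (hf : Measurable f) (z0 : ℂ) :
    Measurable fun q : ℝ × ℝ => f (circleMap z0 q.1 q.2) * ENNReal.ofReal q.1 :=
  (hf.comp (continuous_circleMap_uncurry z0).measurable).mul
    (measurable_ofReal.comp measurable_fst)

theorem measurable_circleLIntegral {f : ℂ → ℝ≥0∞} (hf : Measurable f) (z0 : ℂ) :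
    Measurable (circleLIntegral f z0) :=
  (measurable_circleLIntegral_integrand hf z0).lintegral_prod_right'

theorem lintegral_eq_lintegral_Ioi_circleLIntegral {f : ℂ → ℝ≥0∞} (hf : Measurable f)
    (z0 : ℂ) : ∫⁻ z, f z = ∫⁻ r in Ioi 0, circleLIntegral f z0 r := by
  calc ∫⁻ z, f z = ∫⁻ z, f (z0 + z) := (lintegral_add_left_eq_self f z0).symm
    _ = ∫⁻ q in Ioi 0 ×ˢ Ioo (-π) π, f (circleMap z0 q.1 q.2) * ENNReal.ofReal q.1 := by
      rw [← Complex.lintegral_comp_polarCoord_symm, polarCoord_target]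
      refine setLIntegral_congr_fun (measurableSet_Ioi.prod measurableSet_Ioo) fun q _ => ?_
      rw [smul_eq_mul, mul_comm, Complex.polarCoord_symm_apply, circleMap, Complex.exp_mul_I,
        Complex.ofReal_cos, Complex.ofReal_sin]
    _ = ∫⁻ r in Ioi 0, ∫⁻ θ in Ioo (-π) π, f (circleMap z0 r θ) * ENNReal.ofReal r := by
      rw [Measure.volume_eq_prod, ← Measure.prod_restrict, lintegral_prod _
        (measurable_circleLIntegral_integrand hf z0).aemeasurable]
    _ = ∫⁻ r in Ioi 0, circleLIntegral f z0 r := by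
      refine lintegral_congr fun r => ?_
      -- the polar chart takes angles in `(-π, π)`; periodicity moves them to `(0, 2π]`
      have hper : Function.Periodic (fun θ => f (circleMap z0 r θ) * ENNReal.ofReal r) (2 * π) :=
        fun θ => by simp only [periodic_circleMap z0 r θ]
      have h := hper.setLIntegral_Ioc_add_eq two_pi_pos (-π) 0
      rwa [show -π + 2 * π = π by ring, zero_add, ← setLIntegral_congr Ioo_ae_eq_Ioc] at h

theorem measurableSet_annulus (z0 : ℂ) (r1 r2 : ℝ) : MeasurableSet (annulus z0 r1 r2) :=
  (by fun_prop : Measurable fun z => ‖z - z0‖) measurableSet_Ioo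

theorem circleMap_mem_annulus_iff {z0 : ℂ} {r1 r2 r θ : ℝ} :
    circleMap z0 r θ ∈ annulus z0 r1 r2 ↔ |r| ∈ Ioo r1 r2 := by
  simp only [annulus, mem_ofPred_eq, circleMap_sub_center, norm_circleMap_zero, mem_Ioo]

theorem circleLIntegral_indicator_annulus (f : ℂ → ℝ≥0∞) (z0 : ℂ) (r1 r2 : ℝ) {r : ℝ}
    (hr : 0 ≤ r) :
    circleLIntegral ((annulus z0 r1 r2).indicator f) z0 r
      = (Ioo r1 r2).indicator (circleLIntegral f z0) r := by
  by_cases h : r ∈ Ioo r1 r2 <;>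
    simp [circleLIntegral, circleMap_mem_annulus_iff, abs_of_nonneg hr, h]

theorem setLIntegral_annulus_eq {f : ℂ → ℝ≥0∞} (hf : Measurable f) (z0 : ℂ) {r1 : ℝ}
    (hr1 : 0 ≤ r1) (r2 : ℝ) :
    ∫⁻ z in annulus z0 r1 r2, f z = ∫⁻ r in Ioo r1 r2, circleLIntegral f z0 r := by
  rw [← lintegral_indicator (measurableSet_annulus z0 r1 r2),
    lintegral_eq_lintegral_Ioi_circleLIntegral (hf.indicator (measurableSet_annulus z0 r1 r2)) z0,
    setLIntegral_congr_fun measurableSet_Ioi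
      fun r hr => circleLIntegral_indicator_annulus f z0 r1 r2 (le_of_lt hr),
    lintegral_indicator measurableSet_Ioo, Measure.restrict_restrict measurableSet_Ioo,
    inter_eq_left.mpr ((Ioo_subset_Ioo_left hr1).trans Ioo_subset_Ioi_self)]

theorem ENNReal.rpow_one_div_sub_one_div_rpow_div_self {a : ℝ≥0∞} (c : ℝ≥0∞) {p : ℝ}
    (hp : 1 < p) (ha0 : a ≠ 0) (hatop : a ≠ ⊤) :
    (a ^ (1 / (p - 1)) / c) ^ p / a = a ^ (1 / (p - 1)) / c ^ p := by
  have hexp : 1 / (p - 1) * p = 1 / (p - 1) + 1 := by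
    field_simp [(sub_pos.mpr hp).ne']
    ring
  rw [ENNReal.div_rpow_of_nonneg _ _ (by linarith), ← ENNReal.rpow_mul, hexp,
    ENNReal.rpow_add _ _ ha0 hatop, ENNReal.rpow_one, div_eq_mul_inv, div_eq_mul_inv,
    div_eq_mul_inv, mul_right_comm, mul_assoc _ a, ENNReal.mul_inv_cancel ha0 hatop, mul_one,
    ← div_eq_mul_inv]

theorem ENNReal.div_rpow_self_eq_inv_rpow_sub_one {c : ℝ≥0∞} (hc0 : c ≠ 0) (hctop : c ≠ ⊤)
    (p : ℝ) : c / c ^ p = (c ^ (p - 1))⁻¹ := by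
  rw [← ENNReal.rpow_neg, neg_sub, ENNReal.rpow_sub 1 p hc0 hctop, ENNReal.rpow_one]

theorem stmt5_general (p : ℝ) (hp : 1 < p) (z0 : ℂ) (r1 r2 : ℝ) (hr1 : 0 < r1)
    (Q : ℂ → ℝ) (hQm : Measurable Q) (hQpos : ∀ z, 0 < Q z)
    (hQn : ∀ᵐ (r : ℝ) ∂(volume.restrict (Set.Ioo r1 r2)),
      0 < normQ Q p z0 r ∧ normQ Q p z0 r < ⊤)
    (ϱ0 : ℂ → ℝ≥0∞)
    (hϱ0 : ϱ0 = fun z => if z ∈ annulus z0 r1 r2 then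
        ENNReal.ofReal (Q z) ^ (1 / (p - 1))
          / circlePowInt Q (1 / (p - 1)) z0 ‖z - z0‖
      else 0) :
    (∀ᵐ (r : ℝ) ∂(volume.restrict (Set.Ioo r1 r2)),
        ∫⁻ θ in Set.Ioc (0 : ℝ) (2 * π),
          ϱ0 (z0 + (r : ℂ) * Complex.exp ((θ : ℂ) * Complex.I))
            * ENNReal.ofReal r = 1) ∧
      ∫⁻ z in annulus z0 r1 r2, ϱ0 z ^ p / ENNReal.ofReal (Q z) ∂volume
        = ∫⁻ r in Set.Ioo r1 r2, (normQ Q p z0 r)⁻¹ ∂volume := by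
  set C := circlePowInt Q (1 / (p - 1)) z0
  have hQe : Measurable fun z => ENNReal.ofReal (Q z) ^ (1 / (p - 1)) :=
    hQm.ennreal_ofReal.pow_const _
  have hϱ0m : Measurable ϱ0 := hϱ0 ▸ (hQe.div ((measurable_circleLIntegral hQe z0).comp
    (by fun_prop))).ite (measurableSet_annulus z0 r1 r2) measurable_const
  have hC : ∀ᵐ r ∂(volume.restrict (Ioo r1 r2)), r ∈ Ioo r1 r2 ∧ C r ≠ 0 ∧ C r ≠ ⊤ := by
    filter_upwards [hQn, ae_restrict_mem measurableSet_Ioo] with r hr hmem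
    exact ⟨hmem, (ENNReal.rpow_eq_zero_iff_of_pos (sub_pos.mpr hp)).not.mp hr.1.ne',
      ((ENNReal.rpow_lt_top_iff_of_pos (sub_pos.mpr hp)).mp hr.2).ne⟩
  have hϱ0_sphere : ∀ r ∈ Ioo r1 r2, ∀ z ∈ Metric.sphere z0 |r|,
      ϱ0 z = ENNReal.ofReal (Q z) ^ (1 / (p - 1)) / C r := by
    intro r hr z hz
    rw [mem_sphere_iff_norm, abs_of_pos (hr1.trans hr.1)] at hz
    have hzA : z ∈ annulus z0 r1 r2 := ⟨hz.symm ▸ hr.1, hz.symm ▸ hr.2⟩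
    simp only [hϱ0, if_pos hzA, hz]
  constructor
  · filter_upwards [hC] with r ⟨hr, hC0, hCtop⟩
    change circleLIntegral ϱ0 z0 r = 1
    rw [circleLIntegral_congr (hϱ0_sphere r hr), circleLIntegral_div_const _ _ _ hC0]
    exact ENNReal.div_self hC0 hCtop
  · rw [setLIntegral_annulus_eq (f := fun z => ϱ0 z ^ p / ENNReal.ofReal (Q z))
      ((hϱ0m.pow_const p).div hQm.ennreal_ofReal) z0 hr1.le r2]
    refine lintegral_congr_ae ?_
    filter_upwards [hC] with r ⟨hr, hC0, hCtop⟩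
    have hQ0 : ∀ z, ENNReal.ofReal (Q z) ≠ 0 := fun z => (ENNReal.ofReal_pos.mpr (hQpos z)).ne'
    rw [circleLIntegral_congr fun z hz => by
        rw [hϱ0_sphere r hr z hz, ENNReal.rpow_one_div_sub_one_div_rpow_div_self _ hp (hQ0 z)
          ENNReal.ofReal_ne_top],
      circleLIntegral_div_const _ _ _ ((ENNReal.rpow_pos (pos_iff_ne_zero.mpr hC0) hCtop).ne')]
    exact ENNReal.div_rpow_self_eq_inv_rpow_sub_one hC0 hCtop p

/-- The extremal function
`ϱ₀(z) = Q(z)^{1/(p-1)} / ∫_{C(z₀,|z-z₀|)} Q^{1/(p-1)} |dz|` on the annulus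
(and `0` outside) has arclength integral `1` over the circle `|z-z₀| = r` for a.e.
`r ∈ (r₁,r₂)` and attains the value `∫_{r₁}^{r₂} dr/‖Q‖_{1/(p-1)}(z₀,r)` for
`∫_{R(z₀,r₁,r₂)} ϱ₀^p/Q dm`, i.e. it attains the infimum over all admissible `ϱ`. -/
theorem stmt5 (p : ℝ) (hp : 1 < p) (z0 : ℂ) (r1 r2 : ℝ) (hr1 : 0 < r1) (hr12 : r1 < r2)
    (Q : ℂ → ℝ) (hQm : Measurable Q) (hQpos : ∀ z, 0 < Q z)
    (hQn : ∀ᵐ (r : ℝ) ∂(volume.restrict (Set.Ioo r1 r2)),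
      0 < normQ Q p z0 r ∧ normQ Q p z0 r < ⊤)
    (ϱ0 : ℂ → ℝ≥0∞)
    (hϱ0 : ϱ0 = fun z => if z ∈ annulus z0 r1 r2 then
        ENNReal.ofReal (Q z) ^ (1 / (p - 1))
          / circlePowInt Q (1 / (p - 1)) z0 ‖z - z0‖
      else 0) :
    (∀ᵐ (r : ℝ) ∂(volume.restrict (Set.Ioo r1 r2)),
        ∫⁻ θ in Set.Ioc (0 : ℝ) (2 * π),
          ϱ0 (z0 + (r : ℂ) * Complex.exp ((θ : ℂ) * Complex.I))
            * ENNReal.ofReal r = 1) ∧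
      ∫⁻ z in annulus z0 r1 r2, ϱ0 z ^ p / ENNReal.ofReal (Q z) ∂volume
        = ∫⁻ r in Set.Ioo r1 r2, (normQ Q p z0 r)⁻¹ ∂volume :=
  stmt5_general p hp z0 r1 r2 hr1 Q hQm hQpos hQn ϱ0 hϱ0
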